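/- arXiv:0908.0042 — 2 statements merged into one kernel-verified Lean document; each statement's English description precedes it below -/
import Mathlib

section
/- Necessity direction of the block-matrix transversal theorem: if there exist subsets 𝐬ᵢ ⊆ Sᵢ with |𝐬ᵢ| = sᵢ and 𝐭ⱼ ⊆ Tⱼ with |𝐭ⱼ| = tⱼ (where Σ sᵢ = Σ tⱼ = R) such that G(⋃𝐬ᵢ, ⋃𝐭ⱼ) is nonsingular, then for every I ⊆ {1,…,m} and K ⊆ {1,…,n}, rank(G(⋃_{i∈I} Sᵢ, ⋃_{k∈K} T_k)) ≥ Σ_{i∈I} sᵢ + Σ_{k∈K} t_k − R. -/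
/-- Rank of the submatrix of `G` with rows in `U` and columns in `V`. -/
noncomputable def rk {F S T : Type*} [Field F] [Fintype S] [Fintype T]
    (G : Matrix S T F) (U : Finset S) (V : Finset T) : ℕ :=
  (G.submatrix (fun i : U => (i : S)) (fun j : V => (j : T))).rank

/-- The submatrix of `G` on rows `U` and columns `V` is square and nonsingular. -/
def IsNonsingularSub {F S T : Type*} [Field F] [Fintype S] [Fintype T] [DecidableEq S]
    (G : Matrix S T F) (U : Finset S) (V : Finset T) : Prop :=
  ∃ e : (U : Finset S) ≃ (V : Finset T),
    ((G.submatrix (fun i : U => (i : S)) (fun j : V => (j : T))).submatrix id e).det ≠ 0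

/-!
With `A = ⋃ aᵢ` and `B = ⋃ bⱼ`, the nonsingular `G(A, B)` has rank `R = |A| = |B|`. Put
`P = ⋃_{i ∈ I} aᵢ` and `Q = ⋃_{k ∈ K} b_k`. Deleting a row or a column lowers the rank by at
most one, so removing the `R - |P|` rows of `A \ P` and the `R - |Q|` columns of `B \ Q` leaves
`rank G(P, Q) ≥ |P| + |Q| - R`; and `G(P, Q)` is a submatrix of `G(⋃_{i ∈ I} Sᵢ, ⋃_{k ∈ K} T_k)`.
-/

open Finset Matrix

theorem Finset.range_inclusion_union_range_inclusion_sdiff {α : Type*} [DecidableEq α]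
    {X Y : Finset α} (hXY : Y ⊆ X) :
    Set.range (fun y : Y => (⟨y, hXY y.2⟩ : X)) ∪
      Set.range (fun y : ↥(X \ Y) => (⟨y, (mem_sdiff.mp y.2).1⟩ : X)) = Set.univ := by
  refine Set.eq_univ_of_forall fun x => ?_
  by_cases hx : (x : α) ∈ Y
  · exact Or.inl ⟨⟨x, hx⟩, rfl⟩
  · exact Or.inr ⟨⟨x, mem_sdiff.mpr ⟨x.2, hx⟩⟩, rfl⟩

theorem Finset.card_biUnion_of_subset_of_disjoint {ι α : Type*} [DecidableEq α]
    {X Y : ι → Finset α} (hX : ∀ i j, i ≠ j → Disjoint (X i) (X j)) (hY : ∀ i, Y i ⊆ X i)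
    (I : Finset ι) : #(I.biUnion Y) = ∑ i ∈ I, #(Y i) :=
  card_biUnion fun i _ j _ hij => (hX i j hij).mono (hY i) (hY j)

namespace Matrix

variable {F m n α β : Type*} [Field F] [Fintype m] [Fintype n] [Fintype α] [Fintype β]

theorem rank_le_rank_submatrix_add_rank_submatrix_cols (A : Matrix m n F) (g₁ : α → n)
    (g₂ : β → n) (h : Set.range g₁ ∪ Set.range g₂ = Set.univ) :
    A.rank ≤ (A.submatrix id g₁).rank + (A.submatrix id g₂).rank := by
  simp only [rank_eq_finrank_span_cols]
  have hcols : Set.range A.col = Set.range (A.submatrix id g₁).col ∪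
      Set.range (A.submatrix id g₂).col := by
    rw [show (A.submatrix id g₁).col = A.col ∘ g₁ from rfl,
      show (A.submatrix id g₂).col = A.col ∘ g₂ from rfl,
      Set.range_comp, Set.range_comp, ← Set.image_union, h, Set.image_univ]
  rw [hcols, Submodule.span_union]
  exact Submodule.finrank_add_le_finrank_add_finrank _ _

theorem rank_le_rank_submatrix_add_rank_submatrix_rows (A : Matrix m n F) (f₁ : α → m)
    (f₂ : β → m) (h : Set.range f₁ ∪ Set.range f₂ = Set.univ) :
    A.rank ≤ (A.submatrix f₁ id).rank + (A.submatrix f₂ id).rank := by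
  simpa only [← transpose_submatrix, rank_transpose] using
    rank_le_rank_submatrix_add_rank_submatrix_cols Aᵀ f₁ f₂ h

end Matrix

section SubmatrixRank

variable {F S T : Type*} [Field F] [Fintype S] [Fintype T] (G : Matrix S T F)

theorem rk_mono {U U' : Finset S} {V V' : Finset T} (hU : U' ⊆ U) (hV : V' ⊆ V) :
    rk G U' V' ≤ rk G U V :=
  rank_submatrix_le (G.submatrix (fun i : U => (i : S)) (fun j : V => (j : T)))
    (fun i : U' => ⟨i, hU i.2⟩) (fun j : V' => ⟨j, hV j.2⟩)

theorem rk_transpose (U : Finset S) (V : Finset T) : rk Gᵀ V U = rk G U V :=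
  rank_transpose _

theorem rk_le_rk_add_card_sdiff_cols [DecidableEq T] (U : Finset S) {V V' : Finset T}
    (hV : V' ⊆ V) : rk G U V ≤ rk G U V' + #(V \ V') := by
  set M := G.submatrix (fun i : U => (i : S)) (fun j : V => (j : T))
  calc rk G U V
      ≤ (M.submatrix id fun j : V' => ⟨j, hV j.2⟩).rank +
          (M.submatrix id fun j : ↥(V \ V') => ⟨j, (mem_sdiff.mp j.2).1⟩).rank :=
        M.rank_le_rank_submatrix_add_rank_submatrix_cols _ _
          (range_inclusion_union_range_inclusion_sdiff hV)
    _ ≤ rk G U V' + #(V \ V') :=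
        Nat.add_le_add_left ((rank_le_card_width _).trans_eq (Fintype.card_coe _)) _

theorem rk_le_rk_add_card_sdiff_rows [DecidableEq S] {U U' : Finset S} (hU : U' ⊆ U)
    (V : Finset T) : rk G U V ≤ rk G U' V + #(U \ U') := by
  simpa only [rk_transpose] using rk_le_rk_add_card_sdiff_cols Gᵀ V hU

theorem rk_le_rk_add_card_sdiff_add_card_sdiff [DecidableEq S] [DecidableEq T]
    {U U' : Finset S} {V V' : Finset T} (hU : U' ⊆ U) (hV : V' ⊆ V) :
    rk G U V ≤ rk G U' V' + #(U \ U') + #(V \ V') := by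
  have hrows := rk_le_rk_add_card_sdiff_rows G hU V
  have hcols := rk_le_rk_add_card_sdiff_cols G U' hV
  omega

variable {G}

theorem IsNonsingularSub.rk_eq_card [DecidableEq S] {U : Finset S} {V : Finset T}
    (h : IsNonsingularSub G U V) : rk G U V = #U := by
  obtain ⟨e, hdet⟩ := h
  rw [rk, ← rank_submatrix _ (Equiv.refl U) e]
  exact (rank_of_isUnit _ ((isUnit_iff_isUnit_det _).mpr (isUnit_iff_ne_zero.mpr hdet))).trans
    (Fintype.card_coe U)

theorem IsNonsingularSub.card_eq [DecidableEq S] {U : Finset S} {V : Finset T}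
    (h : IsNonsingularSub G U V) : #U = #V := by
  obtain ⟨e, -⟩ := h
  simpa only [Fintype.card_coe] using Fintype.card_congr e

theorem IsNonsingularSub.card_add_card_sub_card_le_rk [DecidableEq S] [DecidableEq T]
    {A P U : Finset S} {B Q V : Finset T} (hns : IsNonsingularSub G A B)
    (hPA : P ⊆ A) (hQB : Q ⊆ B) (hPU : P ⊆ U) (hQV : Q ⊆ V) :
    (#P + #Q - #A : ℤ) ≤ rk G U V := by
  have hsplit := rk_le_rk_add_card_sdiff_add_card_sdiff G hPA hQB
  have hmono := rk_mono G hPU hQV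
  rw [hns.rk_eq_card, card_sdiff_of_subset hPA, card_sdiff_of_subset hQB, ← hns.card_eq] at hsplit
  have hP : #P ≤ #A := card_le_card hPA
  have hQ : #Q ≤ #A := hns.card_eq ▸ card_le_card hQB
  omega

end SubmatrixRank

theorem block_matrix_transversal_necessity_general {F S T : Type*} [Field F] [Fintype S] [Fintype T]
    [DecidableEq S] [DecidableEq T]
    (G : Matrix S T F) (m n : ℕ) (Sp : Fin m → Finset S) (Tp : Fin n → Finset T)
    (hSdisj : ∀ i j, i ≠ j → Disjoint (Sp i) (Sp j))
    (hTdisj : ∀ i j, i ≠ j → Disjoint (Tp i) (Tp j))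
    (s : Fin m → ℕ) (t : Fin n → ℕ) (R : ℕ)
    (hs : ∑ i, s i = R)
    (a : Fin m → Finset S) (b : Fin n → Finset T)
    (ha : ∀ i, a i ⊆ Sp i) (hacard : ∀ i, (a i).card = s i)
    (hb : ∀ j, b j ⊆ Tp j) (hbcard : ∀ j, (b j).card = t j)
    (hns : IsNonsingularSub G (Finset.univ.biUnion a) (Finset.univ.biUnion b)) :
    ∀ (I : Finset (Fin m)) (K : Finset (Fin n)),
      (∑ i ∈ I, (s i : ℤ)) + (∑ k ∈ K, (t k : ℤ)) - R ≤
        (rk G (I.biUnion Sp) (K.biUnion Tp) : ℤ) := by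
  intro I K
  have hcard_a (J : Finset (Fin m)) : #(J.biUnion a) = ∑ i ∈ J, s i := by
    simp only [card_biUnion_of_subset_of_disjoint hSdisj ha, hacard]
  have hcard_b (L : Finset (Fin n)) : #(L.biUnion b) = ∑ k ∈ L, t k := by
    simp only [card_biUnion_of_subset_of_disjoint hTdisj hb, hbcard]
  have key := hns.card_add_card_sub_card_le_rk
    (biUnion_subset_biUnion_of_subset_left a (subset_univ I))
    (biUnion_subset_biUnion_of_subset_left b (subset_univ K))
    (biUnion_mono fun i _ => ha i) (biUnion_mono fun k _ => hb k)
  rw [hcard_a, hcard_a, hcard_b, hs] at key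
  exact_mod_cast key

theorem block_matrix_transversal_necessity {F S T : Type*} [Field F] [Fintype S] [Fintype T]
    [DecidableEq S] [DecidableEq T]
    (G : Matrix S T F) (m n : ℕ) (Sp : Fin m → Finset S) (Tp : Fin n → Finset T)
    (hSdisj : ∀ i j, i ≠ j → Disjoint (Sp i) (Sp j))
    (hScover : Finset.univ.biUnion Sp = (Finset.univ : Finset S))
    (hTdisj : ∀ i j, i ≠ j → Disjoint (Tp i) (Tp j))
    (hTcover : Finset.univ.biUnion Tp = (Finset.univ : Finset T))
    (s : Fin m → ℕ) (t : Fin n → ℕ) (R : ℕ)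
    (hs : ∑ i, s i = R) (ht : ∑ j, t j = R)
    (a : Fin m → Finset S) (b : Fin n → Finset T)
    (ha : ∀ i, a i ⊆ Sp i) (hacard : ∀ i, (a i).card = s i)
    (hb : ∀ j, b j ⊆ Tp j) (hbcard : ∀ j, (b j).card = t j)
    (hns : IsNonsingularSub G (Finset.univ.biUnion a) (Finset.univ.biUnion b)) :
    ∀ (I : Finset (Fin m)) (K : Finset (Fin n)),
      (∑ i ∈ I, (s i : ℤ)) + (∑ k ∈ K, (t k : ℤ)) - R ≤
        (rk G (I.biUnion Sp) (K.biUnion Tp) : ℤ) :=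
  block_matrix_transversal_necessity_general G m n Sp Tp hSdisj hTdisj s t R hs a b ha hacard hb
    hbcard hns
end

section
/- Special case of the block-matrix transversal theorem with rows partitioned (m arbitrary) and columns trivially partitioned (n = 1, t₁ = R): there exist subsets 𝐬ᵢ ⊆ Sᵢ with |𝐬ᵢ| = sᵢ (Σ sᵢ = R) and a set 𝐭 ⊆ T with |𝐭| = R such that G(⋃𝐬ᵢ, 𝐭) is nonsingular, if and only if for every I ⊆ {1,…,m}, rank(G(⋃_{i∈I} Sᵢ, T)) ≥ Σ_{i∈I} sᵢ. -/
open Finset Module Submodule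

theorem Set.finrank_union_add_finrank_inter_le {K V : Type*} [DivisionRing K] [AddCommGroup V]
    [Module K V] [FiniteDimensional K V] (s t : Set V) :
    Set.finrank K (s ∪ t) + Set.finrank K (s ∩ t) ≤ Set.finrank K s + Set.finrank K t := by
  have hinter : span K (s ∩ t) ≤ span K s ⊓ span K t :=
    le_inf (span_mono Set.inter_subset_left) (span_mono Set.inter_subset_right)
  rw [Set.finrank, Set.finrank, Set.finrank, Set.finrank, span_union,
    ← finrank_sup_add_finrank_inf_eq (span K s) (span K t)]
  exact Nat.add_le_add_left (Submodule.finrank_mono hinter) _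

lemma LinearIndepOn.finrank_span_image {K V ι : Type*} [DivisionRing K] [AddCommGroup V]
    [Module K V] {v : ι → V} {B : Finset ι} (h : LinearIndepOn K v ↑B) :
    Set.finrank K (v '' ↑B) = #B := by
  rw [Set.image_eq_range, Set.finrank, finrank_span_eq_card h]
  simp

namespace Matrix

theorem exists_linearIndepOn_col_card_eq_rank {K m n : Type*} [Field K] [Fintype n]
    (A : Matrix m n K) :
    ∃ B : Finset n, #B = A.rank ∧ LinearIndepOn K A.col ↑B := by
  obtain ⟨b, -, -, hspan, hb⟩ :=
    exists_linearIndepOn_extension (linearIndepOn_empty K A.col) (Set.empty_subset Set.univ)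
  set B := (Set.toFinite b).toFinset
  rw [← Set.Finite.coe_toFinset (Set.toFinite b)] at hb hspan
  refine ⟨B, ?_, hb⟩
  have hspan_eq : span K (A.col '' ↑B) = span K (Set.range A.col) := by
    rw [← Set.image_univ]
    exact le_antisymm (span_mono (Set.image_mono (Set.subset_univ _))) (span_le.2 hspan)
  rw [rank_eq_finrank_span_cols, ← hb.finrank_span_image, Set.finrank, hspan_eq]

end Matrix

section Rado

variable {S ι : Type*} [DecidableEq S]

def RadoCondition (r : Finset S → ℕ) (A : ι → Finset S) : Prop :=
  ∀ J : Finset ι, #J ≤ r (J.biUnion A)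

variable {r : Finset S → ℕ} {A : ι → Finset S}

lemma RadoCondition.mem_of_lt_card [DecidableEq ι] (h : RadoCondition r A) {i : ι}
    {X : Finset S} {J : Finset ι} (hJ : r (J.biUnion (Function.update A i X)) < #J) : i ∈ J := by
  by_contra hi
  rw [biUnion_congr rfl fun j hj => Function.update_of_ne (ne_of_mem_of_not_mem hj hi) X A] at hJ
  exact (h J).not_gt hJ

lemma RadoCondition.update_erase_or [DecidableEq ι] (hmono : Monotone r)
    (hsub : ∀ U V, r (U ∪ V) + r (U ∩ V) ≤ r U + r V) (h : RadoCondition r A) (i : ι)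
    {x y : S} (hxy : x ≠ y) :
    RadoCondition r (Function.update A i ((A i).erase x)) ∨
      RadoCondition r (Function.update A i ((A i).erase y)) := by
  simp only [or_iff_not_and_not, RadoCondition, not_forall, not_le]
  rintro ⟨⟨Jx, hJx⟩, ⟨Jy, hJy⟩⟩
  have hix := h.mem_of_lt_card hJx
  have hiy := h.mem_of_lt_card hJy
  set Ax := Function.update A i ((A i).erase x)
  set Ay := Function.update A i ((A i).erase y)
  have hunion : (Jx ∪ Jy).biUnion A ⊆ Jx.biUnion Ax ∪ Jy.biUnion Ay := by
    intro w
    simp only [Ax, Ay, mem_biUnion, mem_union, Function.update_apply]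
    grind
  have hinter : ((Jx ∩ Jy).erase i).biUnion A ⊆ Jx.biUnion Ax ∩ Jy.biUnion Ay := by
    intro w
    simp only [Ax, Ay, mem_biUnion, mem_inter, mem_erase, Function.update_apply]
    grind
  -- Rado's condition on `Jx ∪ Jy` and `(Jx ∩ Jy) \ {i}`, monotonicity and submodularity give
  -- `#Jx + #Jy - 1 ≤ r (Jx.biUnion Ax) + r (Jy.biUnion Ay) ≤ #Jx + #Jy - 2`.
  have := (h (Jx ∪ Jy)).trans (hmono hunion)
  have := (h ((Jx ∩ Jy).erase i)).trans (hmono hinter)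
  have := hsub (Jx.biUnion Ax) (Jy.biUnion Ay)
  have := card_union_add_card_inter Jx Jy
  have := card_erase_add_one (mem_inter.2 ⟨hix, hiy⟩)
  omega

lemma update_erase_subset [DecidableEq ι] (A : ι → Finset S) (i : ι) (x : S) (j : ι) :
    Function.update A i ((A i).erase x) j ⊆ A j := by
  rcases eq_or_ne j i with rfl | hji
  · simpa using erase_subset x (A j)
  · simp [hji]

lemma sum_card_update_erase_lt [Fintype ι] [DecidableEq ι] {i : ι} {x : S} (hx : x ∈ A i) :
    ∑ j, #(Function.update A i ((A i).erase x) j) < ∑ j, #(A j) :=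
  sum_lt_sum (fun j _ => card_le_card (update_erase_subset A i x j))
    ⟨i, mem_univ i, by simpa using card_erase_lt_of_mem hx⟩

lemma RadoCondition.exists_eq_singleton (h0 : r ∅ = 0) (h : RadoCondition r A)
    (hA : ∀ i, #(A i) ≤ 1) : ∃ f : ι → S, ∀ i, A i = {f i} := by
  have hne : ∀ i, (A i).Nonempty := fun i => by
    by_contra hempty
    simpa [not_nonempty_iff_eq_empty.1 hempty, h0] using h {i}
  choose f hf using fun i => card_eq_one.1 (le_antisymm (hA i) (hne i).card_pos)
  exact ⟨f, hf⟩

theorem RadoCondition.exists_transversal [Fintype ι] (h0 : r ∅ = 0) (hmono : Monotone r)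
    (hsub : ∀ U V, r (U ∪ V) + r (U ∩ V) ≤ r U + r V) (h : RadoCondition r A) :
    ∃ f : ι → S, (∀ i, f i ∈ A i) ∧ Fintype.card ι ≤ r (univ.image f) := by
  classical
  induction hn : ∑ i, #(A i) using Nat.strong_induction_on generalizing A with
  | _ n ih =>
  by_cases hbig : ∃ i, 1 < #(A i)
  · obtain ⟨i, hi⟩ := hbig
    obtain ⟨x, hx, y, hy, hxy⟩ := one_lt_card.1 hi
    have shrink : ∀ z ∈ A i, RadoCondition r (Function.update A i ((A i).erase z)) →
        ∃ f : ι → S, (∀ i, f i ∈ A i) ∧ Fintype.card ι ≤ r (univ.image f) := by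
      intro z hz hrado
      obtain ⟨f, hf, hcard⟩ := ih _ (hn ▸ sum_card_update_erase_lt hz) hrado rfl
      exact ⟨f, fun j => update_erase_subset A i z j (hf j), hcard⟩
    exact (h.update_erase_or hmono hsub i hxy).elim (shrink x hx) (shrink y hy)
  · simp only [not_exists, not_lt] at hbig
    obtain ⟨f, hf⟩ := h.exists_eq_singleton h0 hbig
    have hbiUnion : univ.biUnion A = univ.image f := by
      ext; simp [hf, eq_comm]
    exact ⟨f, fun i => by simp [hf], by simpa [hbiUnion] using h univ⟩

end Rado

theorem exists_linearIndependent_transversal {K V S ι : Type*} [DivisionRing K] [AddCommGroup V]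
    [Module K V] [FiniteDimensional K V] [DecidableEq S] [Fintype ι] (v : S → V)
    (A : ι → Finset S) (h : RadoCondition (fun U => Set.finrank K (v '' ↑U)) A) :
    ∃ f : ι → S, (∀ i, f i ∈ A i) ∧ LinearIndependent K (v ∘ f) := by
  have hmono : Monotone fun U : Finset S => Set.finrank K (v '' ↑U) :=
    fun U V hUV => Set.finrank_mono (Set.image_mono (coe_subset.2 hUV))
  have hsub (U V : Finset S) :
      Set.finrank K (v '' ↑(U ∪ V)) + Set.finrank K (v '' ↑(U ∩ V)) ≤
        Set.finrank K (v '' ↑U) + Set.finrank K (v '' ↑V) := by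
    have hinter : v '' ↑(U ∩ V) ⊆ v '' ↑U ∩ v '' ↑V :=
      coe_inter U V ▸ Set.image_inter_subset v U V
    rw [coe_union, Set.image_union]
    exact (Nat.add_le_add_left (Set.finrank_mono hinter) _).trans
      (Set.finrank_union_add_finrank_inter_le _ _)
  obtain ⟨f, hfA, hcard⟩ := h.exists_transversal (by simp) hmono hsub
  have hrange : v '' ↑(univ.image f) = Set.range (v ∘ f) := by
    rw [coe_image, coe_univ, Set.image_univ, Set.range_comp]
  refine ⟨f, hfA, linearIndependent_iff_card_eq_finrank_span.2 (le_antisymm ?_ ?_)⟩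
  · rwa [hrange] at hcard
  · exact finrank_range_le_card _

section Rows

variable {F S T : Type*} [Field F] [Fintype S] [Fintype T]

lemma rk_univ_eq_finrank (G : Matrix S T F) (U : Finset S) :
    rk G U univ = Set.finrank F (G.row '' ↑U) := by
  rw [rk, show G.submatrix (fun i : U => (i : S)) (fun j : (univ : Finset T) => (j : T)) =
      (G.submatrix (fun i : U => (i : S)) id).submatrix (Equiv.refl _)
        (Equiv.subtypeUnivEquiv mem_univ) from rfl, Matrix.rank_submatrix,
    Matrix.rank_eq_finrank_span_row, Set.finrank, Set.image_eq_range]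
  rfl

variable [DecidableEq S] {G : Matrix S T F} {U : Finset S}

lemma IsNonsingularSub.linearIndepOn {b : Finset T} (h : IsNonsingularSub G U b) :
    LinearIndepOn F G.row ↑U := by
  obtain ⟨e, hdet⟩ := h
  exact (Matrix.linearIndependent_rows_of_det_ne_zero hdet).of_comp
    (LinearMap.funLeft F F fun u => (e u : T))

lemma LinearIndepOn.exists_isNonsingularSub (h : LinearIndepOn F G.row ↑U) :
    ∃ b : Finset T, #b = #U ∧ IsNonsingularSub G U b := by
  set M : Matrix U T F := G.submatrix (↑) id
  obtain ⟨b, hcard, hb⟩ := M.exists_linearIndepOn_col_card_eq_rank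
  rw [(show LinearIndependent F M.row from h).rank_matrix, Fintype.card_coe] at hcard
  let e : U ≃ b := Fintype.equivOfCardEq (by simp [hcard])
  refine ⟨b, hcard, e, ?_⟩
  rw [← isUnit_iff_ne_zero, ← Matrix.isUnit_iff_isUnit_det,
    ← Matrix.linearIndependent_cols_iff_isUnit]
  exact hb.comp e e.injective

lemma IsNonsingularSub.card_le_rk {b : Finset T} (h : IsNonsingularSub G U b) {W X : Finset S}
    (hWU : W ⊆ U) (hWX : W ⊆ X) : #W ≤ rk G X univ := by
  rw [rk_univ_eq_finrank, ← (h.linearIndepOn.mono (coe_subset.2 hWU)).finrank_span_image]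
  exact Set.finrank_mono (Set.image_mono (coe_subset.2 hWX))

end Rows

theorem Finset.card_le_sum_card_image_sigma_fst {α : Type*} {κ : α → Type*} [DecidableEq α]
    [∀ a, Fintype (κ a)] (J : Finset (Σ a, κ a)) :
    #J ≤ ∑ a ∈ J.image Sigma.fst, Fintype.card (κ a) := by
  have hJ : J ⊆ (J.image Sigma.fst).sigma fun _ => univ := fun p hp =>
    mem_sigma.2 ⟨mem_image_of_mem _ hp, mem_univ _⟩
  simpa using card_le_card hJ

theorem block_matrix_transversal_rows_general {F S T : Type*} [Field F] [Fintype S] [Fintype T]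
    [DecidableEq S]
    (G : Matrix S T F) (m : ℕ) (Sp : Fin m → Finset S)
    (hSdisj : ∀ i j, i ≠ j → Disjoint (Sp i) (Sp j))
    (s : Fin m → ℕ) (R : ℕ) (hs : ∑ i, s i = R) :
    (∃ (a : Fin m → Finset S) (b : Finset T),
        (∀ i, a i ⊆ Sp i) ∧ (∀ i, (a i).card = s i) ∧ b.card = R ∧
        IsNonsingularSub G (Finset.univ.biUnion a) b) ↔
      ∀ I : Finset (Fin m), ∑ i ∈ I, s i ≤ rk G (I.biUnion Sp) Finset.univ := by
  constructor
  · rintro ⟨a, b, haSp, hcard, -, hns⟩ I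
    have hdisj : (I : Set (Fin m)).PairwiseDisjoint a :=
      fun i _ j _ hij => (hSdisj i j hij).mono (haSp i) (haSp j)
    calc ∑ i ∈ I, s i = #(I.biUnion a) := by simp [card_biUnion hdisj, hcard]
      _ ≤ rk G (I.biUnion Sp) univ :=
        hns.card_le_rk (biUnion_subset_biUnion_of_subset_left a (subset_univ I))
          (biUnion_mono fun i _ => haSp i)
  · intro hcond
    obtain ⟨f, hfSp, hf⟩ := exists_linearIndependent_transversal (K := F) G.row
      (fun p : Σ i, Fin (s i) => Sp p.1) fun J => by
        have hJ := J.card_le_sum_card_image_sigma_fst.trans_eq (by simp) |>.trans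
          (hcond (J.image Sigma.fst))
        rwa [rk_univ_eq_finrank, image_biUnion] at hJ
    have hfinj : Function.Injective f := hf.injective.of_comp
    have hU : univ.biUnion (fun i => univ.image (f ∘ Sigma.mk i)) = univ.image f := by
      ext; simp
    have hind : LinearIndepOn F G.row ↑(univ.image f) := by
      rwa [coe_image, coe_univ, Set.image_univ, linearIndepOn_range_iff hfinj]
    obtain ⟨b, hb, hns⟩ := hind.exists_isNonsingularSub
    refine ⟨fun i => univ.image (f ∘ Sigma.mk i), b, fun i => ?_, fun i => ?_, ?_, hU ▸ hns⟩
    · exact image_subset_iff.2 fun k _ => hfSp ⟨i, k⟩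
    · simp [card_image_of_injective _ (hfinj.comp sigma_mk_injective)]
    · simp [hb, card_image_of_injective _ hfinj, ← hs]

theorem block_matrix_transversal_rows {F S T : Type*} [Field F] [Fintype S] [Fintype T]
    [DecidableEq S]
    (G : Matrix S T F) (m : ℕ) (Sp : Fin m → Finset S)
    (hSdisj : ∀ i j, i ≠ j → Disjoint (Sp i) (Sp j))
    (hScover : Finset.univ.biUnion Sp = (Finset.univ : Finset S))
    (s : Fin m → ℕ) (R : ℕ) (hs : ∑ i, s i = R) :
    (∃ (a : Fin m → Finset S) (b : Finset T),
        (∀ i, a i ⊆ Sp i) ∧ (∀ i, (a i).card = s i) ∧ b.card = R ∧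
        IsNonsingularSub G (Finset.univ.biUnion a) b) ↔
      ∀ I : Finset (Fin m), ∑ i ∈ I, s i ≤ rk G (I.biUnion Sp) Finset.univ :=
  block_matrix_transversal_rows_general G m Sp hSdisj s R hs
end
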